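/- For every ε > 0, m ≥ 0, and (x,t) ∈ εℤ² with t > 0: (1) a₁(x,t,m,ε) = a₁(−x,t,m,ε); and (2) (t−x)·a₂(x,t,m,ε) = (t+x−2ε)·a₂(2ε−x,t,m,ε). -/

import Mathlib

noncomputable section

/-- The `i`-th move of a checker path encoded as `f : Fin n → Bool`
(`true` = upwards-right move `(ε,ε)`, `false` = upwards-left move `(−ε,ε)`);
out-of-range indices default to `true`. -/
def fcStep {n : ℕ} (f : Fin n → Bool) (i : ℕ) : Bool :=
  if h : i < n then f ⟨i, h⟩ else true

/-- The number of turns of the checker path `f`. -/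
def fcTurns {n : ℕ} (f : Fin n → Bool) : ℕ :=
  ((Finset.range (n - 1)).filter fun i => fcStep f i ≠ fcStep f (i + 1)).card

/-- The position (in units of `ε`) of the checker path `f` after `i` moves,
starting from the origin. -/
def fcPos {n : ℕ} (f : Fin n → Bool) (i : ℕ) : ℤ :=
  ∑ j ∈ Finset.range i, (if fcStep f j then (1 : ℤ) else -1)

/-- Checker paths from `(0,0)` to `(εx, εn)` whose first step is to `(ε,ε)`. -/
def fcPaths (n : ℕ) (x : ℤ) : Finset (Fin n → Bool) :=
  Finset.univ.filter fun f =>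
    (∀ i : Fin n, (i : ℕ) = 0 → f i = true) ∧ fcPos f n = x

/-- The amplitude `a(εx, εn, m, ε)`. -/
def fcAmp (m ε : ℝ) (x : ℤ) (n : ℕ) : ℂ :=
  (((1 + m ^ 2 * ε ^ 2) ^ ((1 - (n : ℝ)) / 2) : ℝ) : ℂ) * Complex.I *
    ∑ f ∈ fcPaths n x, (-Complex.I * (m * ε)) ^ fcTurns f

/-- The probability `P(εx, εn, m, ε)` to find the electron at `(εx, εn)`. -/
def fcP (m ε : ℝ) (x : ℤ) (n : ℕ) : ℝ := ‖fcAmp m ε x n‖ ^ 2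

/-! Split the sum defining `a` according to the last move of the path. A path starting to the
right has an even number of turns exactly when it also ends to the right, so for `w = -imε` the
paths ending to the right contribute only to `a₂` and those ending to the left only to `a₁`.
Appending a move gives a two-term recursion for the two partial sums, solved by binomial sums in
`w²` (one term for each number of turns). For the paths ending to the left this sum is symmetric
in the numbers of right and left moves, which gives (1); for those ending to the right,
`(q + 1) C(q, k) = (k + 1) C(q + 1, k + 1)` turns it into the weighted symmetry (2). -/

theorem fcStep_snoc {n : ℕ} (f : Fin n → Bool) (b : Bool) (i : ℕ) :
    fcStep (Fin.snoc f b) i = if i = n then b else fcStep f i := by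
  unfold fcStep
  rcases lt_trichotomy i n with h | rfl | h
  · rw [dif_pos (by omega), if_neg h.ne, dif_pos h]
    exact Fin.snoc_castSucc (α := fun _ => Bool) b f ⟨i, h⟩
  · rw [dif_pos (by omega), if_pos rfl]
    exact Fin.snoc_last (α := fun _ => Bool) b f
  · rw [dif_neg (by omega), if_neg (by omega), dif_neg (by omega)]

theorem fcStep_last {n : ℕ} (f : Fin (n + 1) → Bool) : fcStep f n = f (Fin.last n) :=
  dif_pos n.lt_add_one

theorem snoc_init_of_fcStep_last {n : ℕ} {f : Fin (n + 1) → Bool} {b : Bool}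
    (hb : fcStep f n = b) : Fin.snoc (Fin.init f) b = f := by
  rw [← hb, fcStep_last]
  exact Fin.snoc_init_self f

theorem fcPos_snoc {n : ℕ} (f : Fin n → Bool) (b : Bool) :
    fcPos (Fin.snoc f b) (n + 1) = fcPos f n + if b then 1 else -1 := by
  unfold fcPos
  rw [Finset.sum_range_succ, fcStep_snoc, if_pos rfl]
  congr 1
  refine Finset.sum_congr rfl fun j hj => ?_
  rw [fcStep_snoc, if_neg (Finset.mem_range.mp hj).ne]

theorem fcTurns_snoc {n : ℕ} (hn : 1 ≤ n) (f : Fin n → Bool) (b : Bool) :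
    fcTurns (Fin.snoc f b) = fcTurns f + if fcStep f (n - 1) = b then 0 else 1 := by
  unfold fcTurns
  rw [show n + 1 - 1 = n - 1 + 1 by omega, Finset.range_add_one, Finset.filter_insert,
    fcStep_snoc, fcStep_snoc, if_neg (show n - 1 ≠ n by omega),
    if_pos (show n - 1 + 1 = n by omega)]
  have hinit : (Finset.range (n - 1)).filter
      (fun i => fcStep (Fin.snoc f b) i ≠ fcStep (Fin.snoc f b) (i + 1)) =
      (Finset.range (n - 1)).filter (fun i => fcStep f i ≠ fcStep f (i + 1)) := by
    refine Finset.filter_congr fun i hi => ?_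
    have hi' := Finset.mem_range.mp hi
    rw [fcStep_snoc, fcStep_snoc, if_neg (show i ≠ n by omega),
      if_neg (show i + 1 ≠ n by omega)]
  rw [hinit]
  by_cases h : fcStep f (n - 1) = b
  · simp [h]
  · rw [if_pos h, if_neg h, Finset.card_insert_of_notMem (by simp)]

theorem even_fcTurns_iff {n : ℕ} (f : Fin n → Bool) :
    Even (fcTurns f) ↔ fcStep f 0 = fcStep f (n - 1) := by
  induction n with
  | zero => simp [fcTurns]
  | succ n ih =>
    rcases Nat.eq_zero_or_pos n with rfl | hn
    · simp [fcTurns]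
    induction f using Fin.snocCases with
    | _ g b =>
      rw [fcTurns_snoc hn, fcStep_snoc, fcStep_snoc, if_neg (show 0 ≠ n by omega),
        if_pos (show n + 1 - 1 = n by omega)]
      split_ifs with h
      · rw [add_zero, ih, h]
      · rw [Nat.even_add_one, ih]
        revert h
        cases fcStep g 0 <;> cases fcStep g (n - 1) <;> cases b <;> decide

theorem mem_fcPaths {n : ℕ} {X : ℤ} {f : Fin n → Bool} :
    f ∈ fcPaths n X ↔ fcStep f 0 = true ∧ fcPos f n = X := by
  rw [fcPaths, Finset.mem_filter, and_iff_right (Finset.mem_univ f)]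
  unfold fcStep
  split_ifs with hn
  · exact and_congr_left'
      ⟨fun h => h _ rfl, fun h i hi => (Fin.ext hi : i = ⟨0, hn⟩) ▸ h⟩
  · exact and_congr_left' ⟨fun _ => rfl, fun _ i => absurd i.2 (by omega)⟩

theorem snoc_mem_fcPaths {n : ℕ} (hn : 1 ≤ n) {X : ℤ} {f : Fin n → Bool} {b : Bool} :
    Fin.snoc f b ∈ fcPaths (n + 1) X ↔ f ∈ fcPaths n (X - if b then 1 else -1) := by
  rw [mem_fcPaths, mem_fcPaths, fcStep_snoc, if_neg (show 0 ≠ n by omega), fcPos_snoc,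
    ← eq_sub_iff_add_eq]

theorem exists_fcPos_eq {n : ℕ} {f : Fin n → Bool} (hfirst : fcStep f 0 = true) {i : ℕ}
    (hi : 1 ≤ i) : ∃ p Q : ℕ, p + 1 + Q = i ∧ fcPos f i = p + 1 - Q := by
  induction i, hi using Nat.le_induction with
  | base => exact ⟨0, 0, rfl, by simp [fcPos, hfirst]⟩
  | succ i _ ih =>
    obtain ⟨p, Q, rfl, hpos⟩ := ih
    rw [fcPos, Finset.sum_range_succ, ← fcPos, hpos]
    cases fcStep f (p + 1 + Q)
    · exact ⟨p, Q + 1, by omega, by simp; ring⟩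
    · exact ⟨p + 1, Q, by omega, by simp; ring⟩

theorem exists_eq_of_mem_fcPaths {n : ℕ} (hn : 1 ≤ n) {X : ℤ} {f : Fin n → Bool}
    (hf : f ∈ fcPaths n X) : ∃ p Q : ℕ, p + 1 + Q = n ∧ X = p + 1 - Q := by
  obtain ⟨hfirst, rfl⟩ := mem_fcPaths.mp hf
  exact exists_fcPos_eq hfirst hn

section TurnSum

variable {R : Type*} [CommRing R]

def turnSum (w : R) (n : ℕ) (X : ℤ) (b : Bool) : R :=
  ∑ f ∈ (fcPaths n X).filter (fun f => fcStep f (n - 1) = b), w ^ fcTurns f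

theorem turnSum_eq_zero {n : ℕ} (hn : 1 ≤ n) {X : ℤ}
    (hX : ∀ p Q : ℕ, p + 1 + Q = n → X ≠ p + 1 - Q) (w : R) (b : Bool) :
    turnSum w n X b = 0 := by
  refine Finset.sum_eq_zero fun f hf => ?_
  obtain ⟨p, Q, h, hX'⟩ := exists_eq_of_mem_fcPaths hn (Finset.mem_filter.mp hf).1
  exact absurd hX' (hX p Q h)

theorem turnSum_one (w : R) (b : Bool) : turnSum w 1 1 b = if b then 1 else 0 := by
  cases b
  · have : (fcPaths 1 1).filter (fun f => fcStep f (1 - 1) = false) = ∅ := by decide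
    rw [turnSum, this]
    simp
  · have : (fcPaths 1 1).filter (fun f => fcStep f (1 - 1) = true) = {fun _ => true} := by
      decide
    rw [turnSum, this]
    simp [fcTurns]

theorem turnSum_succ {n : ℕ} (hn : 1 ≤ n) (w : R) (X : ℤ) (b : Bool) :
    turnSum w (n + 1) X b =
      turnSum w n (X - if b then 1 else -1) b + w * turnSum w n (X - if b then 1 else -1) !b := by
  set Y := X - if b then 1 else -1
  have hsnoc : turnSum w (n + 1) X b =
      ∑ f ∈ fcPaths n Y, w ^ (fcTurns f + if fcStep f (n - 1) = b then 0 else 1) := by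
    refine Finset.sum_nbij' Fin.init (Fin.snoc · b) (fun h hh => ?_) (fun f hf => ?_)
      (fun h hh => ?_) (fun f _ => Fin.init_snoc (α := fun _ => Bool) b f) (fun h hh => ?_)
    · obtain ⟨hmem, hlast⟩ := Finset.mem_filter.mp hh
      rw [← snoc_init_of_fcStep_last hlast] at hmem
      exact snoc_mem_fcPaths hn |>.mp hmem
    · refine Finset.mem_filter.mpr ⟨snoc_mem_fcPaths hn |>.mpr hf, ?_⟩
      rw [Nat.add_sub_cancel, fcStep_snoc, if_pos rfl]
    · exact snoc_init_of_fcStep_last (Finset.mem_filter.mp hh).2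
    · rw [← fcTurns_snoc hn, snoc_init_of_fcStep_last (Finset.mem_filter.mp hh).2]
  rw [hsnoc, ← Finset.sum_filter_add_sum_filter_not _ (fun f => fcStep f (n - 1) = b),
    turnSum, turnSum, Finset.mul_sum]
  congr 1
  · exact Finset.sum_congr rfl fun f hf => by rw [if_pos (Finset.mem_filter.mp hf).2, add_zero]
  · refine Finset.sum_congr (Finset.filter_congr fun f _ => by cases b <;> simp) fun f hf => ?_
    rw [(Finset.mem_filter.mp hf).2, if_neg (by cases b <;> decide), pow_succ, mul_comm]

end TurnSum

section TurnPoly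

variable {R : Type*} [CommRing R]

/- For `c = w ^ 2`, `w * oddTurnPoly c p Q` and `evenTurnPoly c p Q` are the sums of `w ^ turns`
over the paths with `p + 1` right and `Q` left moves ending with a left, resp. right, move
(`turnSum_eq_turnPoly`): such a path with `2k + 1`, resp. `2k + 2`, turns alternates between
runs of equal moves, and splitting the moves of each kind into their runs gives the two binomial
coefficients. -/
def oddTurnPoly (c : R) (p : ℕ) : ℕ → R
  | 0 => 0
  | q + 1 => ∑ k ∈ Finset.range (q + 1), c ^ k * p.choose k * q.choose k

def evenTurnPoly (c : R) (p : ℕ) : ℕ → R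
  | 0 => 1
  | q + 1 => ∑ k ∈ Finset.range (q + 1), c ^ (k + 1) * p.choose (k + 1) * q.choose k

variable (c : R)

@[simp]
theorem oddTurnPoly_zero (p : ℕ) : oddTurnPoly c p 0 = 0 := rfl

@[simp]
theorem evenTurnPoly_zero (p : ℕ) : evenTurnPoly c p 0 = 1 := rfl

@[simp]
theorem evenTurnPoly_zero_succ (q : ℕ) : evenTurnPoly c 0 (q + 1) = 0 := by
  simp [evenTurnPoly]

theorem evenTurnPoly_succ_left (p Q : ℕ) :
    evenTurnPoly c (p + 1) Q = evenTurnPoly c p Q + c * oddTurnPoly c p Q := by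
  rcases Q with _ | q
  · simp
  · rw [evenTurnPoly, evenTurnPoly, oddTurnPoly, Finset.mul_sum, ← Finset.sum_add_distrib]
    refine Finset.sum_congr rfl fun k _ => ?_
    rw [Nat.choose_succ_succ']
    push_cast
    ring

theorem oddTurnPoly_succ_right (p Q : ℕ) :
    oddTurnPoly c p (Q + 1) = oddTurnPoly c p Q + evenTurnPoly c p Q := by
  rcases Q with _ | q
  · simp [oddTurnPoly]
  · have hext : ∑ k ∈ Finset.range (q + 1), c ^ k * p.choose k * q.choose k =
        ∑ k ∈ Finset.range (q + 2), c ^ k * p.choose k * q.choose k :=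
      (Finset.eventually_constant_sum (fun k hk => by simp [Nat.choose_eq_zero_of_lt hk])
        (by omega)).symm
    rw [oddTurnPoly, oddTurnPoly, evenTurnPoly, hext, Finset.sum_range_succ',
      Finset.sum_range_succ' _ (q + 1), add_right_comm, ← Finset.sum_add_distrib]
    congr 1
    · refine Finset.sum_congr rfl fun k _ => ?_
      rw [Nat.choose_succ_succ']
      push_cast
      ring
    · simp

theorem oddTurnPoly_succ_comm (p q : ℕ) :
    oddTurnPoly c p (q + 1) = oddTurnPoly c q (p + 1) := by
  rw [oddTurnPoly, oddTurnPoly,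
    ← Finset.eventually_constant_sum (N := q + 1) (n := p + q + 1)
      (fun k hk => by simp [Nat.choose_eq_zero_of_lt hk]) (by omega),
    ← Finset.eventually_constant_sum (N := p + 1) (n := p + q + 1)
      (fun k hk => by simp [Nat.choose_eq_zero_of_lt hk]) (by omega)]
  exact Finset.sum_congr rfl fun k _ => by ring

theorem mul_evenTurnPoly_comm (p Q : ℕ) :
    (Q : R) * evenTurnPoly c p Q = p * evenTurnPoly c Q p := by
  rcases Q with _ | q <;> rcases p with _ | p
  · simp
  · simp
  · simp
  set S : ℕ → R := fun k =>
    c ^ (k + 1) * (k + 1) * (p + 1).choose (k + 1) * (q + 1).choose (k + 1)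
  calc ((q + 1 : ℕ) : R) * evenTurnPoly c (p + 1) (q + 1)
      = ∑ k ∈ Finset.range (q + 1), S k := by
        rw [evenTurnPoly, Finset.mul_sum]
        refine Finset.sum_congr rfl fun k _ => ?_
        have := congrArg (Nat.cast : ℕ → R) (Nat.add_one_mul_choose_eq q k)
        push_cast at this ⊢
        linear_combination (c ^ (k + 1) * ((p + 1).choose (k + 1) : R)) * this
    _ = ∑ k ∈ Finset.range (p + q + 2), S k :=
        (Finset.eventually_constant_sum
          (fun k hk => by simp [S, Nat.choose_eq_zero_of_lt (show q + 1 < k + 1 by omega)])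
          (by omega)).symm
    _ = ∑ k ∈ Finset.range (p + 1), S k :=
        Finset.eventually_constant_sum
          (fun k hk => by simp [S, Nat.choose_eq_zero_of_lt (show p + 1 < k + 1 by omega)])
          (by omega)
    _ = ((p + 1 : ℕ) : R) * evenTurnPoly c (q + 1) (p + 1) := by
        rw [evenTurnPoly, Finset.mul_sum]
        refine Finset.sum_congr rfl fun k _ => ?_
        have := congrArg (Nat.cast : ℕ → R) (Nat.add_one_mul_choose_eq p k)
        push_cast at this ⊢
        linear_combination -(c ^ (k + 1) * ((q + 1).choose (k + 1) : R)) * this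

end TurnPoly

section ClosedForm

variable {R : Type*} [CommRing R]

theorem turnSum_eq_turnPoly (w : R) {n : ℕ} {X : ℤ} {p Q : ℕ} (hn : p + 1 + Q = n)
    (hX : X = p + 1 - Q) :
    turnSum w n X true = evenTurnPoly (w ^ 2) p Q ∧
      turnSum w n X false = w * oddTurnPoly (w ^ 2) p Q := by
  subst hn hX
  induction hN : p + Q generalizing p Q with
  | zero =>
    obtain ⟨rfl, rfl⟩ : p = 0 ∧ Q = 0 := by omega
    norm_num [turnSum_one]
  | succ N ih =>
    rw [show p + 1 + Q = p + Q + 1 by omega, turnSum_succ (by omega), turnSum_succ (by omega)]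
    simp only [if_true, Bool.not_true, Bool.not_false, Bool.false_eq_true, if_false]
    constructor
    · rcases p with _ | p
      · obtain rfl : Q = N + 1 := by omega
        rw [turnSum_eq_zero (by omega) (fun _ _ _ => by omega),
          turnSum_eq_zero (by omega) (fun _ _ _ => by omega), evenTurnPoly_zero_succ]
        ring
      · obtain ⟨ihT, ihF⟩ := ih (p := p) (Q := Q) (by omega)
        rw [show ((p + 1 : ℕ) : ℤ) + 1 - Q - 1 = p + 1 - Q by push_cast; ring, ihT, ihF,
          evenTurnPoly_succ_left]
        ring
    · rcases Q with _ | q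
      · rw [turnSum_eq_zero (by omega) (fun _ _ _ => by omega),
          turnSum_eq_zero (by omega) (fun _ _ _ => by omega), oddTurnPoly_zero]
        ring
      · obtain ⟨ihT, ihF⟩ := ih (p := p) (Q := q) (by omega)
        rw [show (p : ℤ) + 1 - ((q + 1 : ℕ) : ℤ) - -1 = p + 1 - q by push_cast; ring,
          show p + (q + 1) = p + 1 + q by omega, ihT, ihF, oddTurnPoly_succ_right]
        ring

theorem turnSum_false_eq_zero {n : ℕ} (hn : 1 ≤ n) {X : ℤ}
    (hX : ∀ p q : ℕ, p + q + 2 = n → X ≠ p - q) (w : R) : turnSum w n X false = 0 := by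
  by_cases h : ∃ p Q : ℕ, p + 1 + Q = n ∧ X = p + 1 - Q
  · obtain ⟨p, _ | q, hpQ, hpQX⟩ := h
    · rw [(turnSum_eq_turnPoly w hpQ hpQX).2, oddTurnPoly_zero, mul_zero]
    · exact absurd (by push_cast at hpQX; omega) (hX p q (by omega))
  · exact turnSum_eq_zero hn (fun p Q hpQ hpQX => h ⟨p, Q, hpQ, hpQX⟩) w false

theorem turnSum_false_neg (w : R) {n : ℕ} (hn : 1 ≤ n) (X : ℤ) :
    turnSum w n (-X) false = turnSum w n X false := by
  by_cases h : ∃ p q : ℕ, p + q + 2 = n ∧ X = p - q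
  · obtain ⟨p, q, hpq, hpqX⟩ := h
    rw [(turnSum_eq_turnPoly w (p := q) (Q := p + 1) (by omega) (by push_cast; omega)).2,
      (turnSum_eq_turnPoly w (p := p) (Q := q + 1) (by omega) (by push_cast; omega)).2,
      oddTurnPoly_succ_comm]
  · rw [turnSum_false_eq_zero hn (fun p q hpq hpqX => h ⟨q, p, by omega, by omega⟩),
      turnSum_false_eq_zero hn (fun p q hpq hpqX => h ⟨p, q, hpq, hpqX⟩)]

theorem turnSum_true_reflect (w : R) {n : ℕ} (hn : 1 ≤ n) (X : ℤ) :
    ((n : R) - X) * turnSum w n X true = ((n : R) + X - 2) * turnSum w n (2 - X) true := by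
  by_cases h : ∃ p Q : ℕ, p + 1 + Q = n ∧ X = p + 1 - Q
  · obtain ⟨p, Q, hpQ, hpQX⟩ := h
    rw [(turnSum_eq_turnPoly w hpQ hpQX).1,
      (turnSum_eq_turnPoly w (p := Q) (Q := p) (by omega) (by omega)).1, ← hpQ, hpQX]
    push_cast
    linear_combination 2 * mul_evenTurnPoly_comm (w ^ 2) p Q
  · rw [turnSum_eq_zero hn (fun p Q hpQ hpQX => h ⟨p, Q, hpQ, hpQX⟩),
      turnSum_eq_zero hn (fun p Q hpQ hpQX => h ⟨Q, p, by omega, by omega⟩), mul_zero, mul_zero]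

end ClosedForm

section Amplitude

open Complex

theorem neg_I_mul_sq (r : ℝ) : (-I * r) ^ 2 = ((-r ^ 2 : ℝ) : ℂ) := by
  push_cast
  linear_combination (r : ℂ) ^ 2 * I_sq

theorem im_neg_I_mul_pow_of_even (r : ℝ) {k : ℕ} (hk : Even k) : ((-I * r) ^ k).im = 0 := by
  obtain ⟨j, rfl⟩ := hk
  rw [← two_mul, pow_mul, neg_I_mul_sq, ← ofReal_pow, ofReal_im]

theorem re_neg_I_mul_pow_of_odd (r : ℝ) {k : ℕ} (hk : Odd k) : ((-I * r) ^ k).re = 0 := by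
  obtain ⟨j, rfl⟩ := hk
  rw [pow_succ, pow_mul, neg_I_mul_sq, ← ofReal_pow, re_ofReal_mul]
  simp

theorem even_fcTurns_iff_of_mem_fcPaths {n : ℕ} {X : ℤ} {f : Fin n → Bool}
    (hf : f ∈ fcPaths n X) : Even (fcTurns f) ↔ fcStep f (n - 1) = true := by
  rw [even_fcTurns_iff, (mem_fcPaths.mp hf).1, eq_comm]

theorem im_turnSum_true (r : ℝ) (n : ℕ) (X : ℤ) : (turnSum (-I * r) n X true).im = 0 := by
  rw [turnSum, im_sum]
  refine Finset.sum_eq_zero fun f hf => im_neg_I_mul_pow_of_even r ?_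
  obtain ⟨hmem, hlast⟩ := Finset.mem_filter.mp hf
  exact (even_fcTurns_iff_of_mem_fcPaths hmem).mpr hlast

theorem re_turnSum_false (r : ℝ) (n : ℕ) (X : ℤ) : (turnSum (-I * r) n X false).re = 0 := by
  rw [turnSum, re_sum]
  refine Finset.sum_eq_zero fun f hf => re_neg_I_mul_pow_of_odd r ?_
  obtain ⟨hmem, hlast⟩ := Finset.mem_filter.mp hf
  rw [← Nat.not_even_iff_odd, even_fcTurns_iff_of_mem_fcPaths hmem, hlast]
  decide

theorem re_turnSum_true_reflect (r : ℝ) {n : ℕ} (hn : 1 ≤ n) (X : ℤ) :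
    ((n : ℝ) - X) * (turnSum (-I * r) n X true).re =
      ((n : ℝ) + X - 2) * (turnSum (-I * r) n (2 - X) true).re := by
  have h := congrArg re (turnSum_true_reflect (-I * r) hn X)
  rwa [show (n : ℂ) - X = ((n - X : ℝ) : ℂ) by push_cast; rfl,
    show (n : ℂ) + X - 2 = ((n + X - 2 : ℝ) : ℂ) by push_cast; rfl,
    re_ofReal_mul, re_ofReal_mul] at h

theorem fcAmp_eq_turnSum (m ε : ℝ) (X : ℤ) (n : ℕ) :
    fcAmp m ε X n = ((1 + m ^ 2 * ε ^ 2) ^ ((1 - (n : ℝ)) / 2) : ℝ) * I *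
      (turnSum (-I * ↑(m * ε)) n X true + turnSum (-I * ↑(m * ε)) n X false) := by
  rw [fcAmp, ofReal_mul, turnSum, turnSum,
    ← Finset.sum_filter_add_sum_filter_not _ (fun f => fcStep f (n - 1) = true)]
  simp only [Bool.not_eq_true]

theorem re_fcAmp (m ε : ℝ) (X : ℤ) (n : ℕ) :
    (fcAmp m ε X n).re =
      -(1 + m ^ 2 * ε ^ 2) ^ ((1 - (n : ℝ)) / 2) *
        (turnSum (-I * ↑(m * ε)) n X false).im := by
  rw [fcAmp_eq_turnSum, mul_assoc, re_ofReal_mul, I_mul_re, add_im, im_turnSum_true]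
  ring

theorem im_fcAmp (m ε : ℝ) (X : ℤ) (n : ℕ) :
    (fcAmp m ε X n).im =
      (1 + m ^ 2 * ε ^ 2) ^ ((1 - (n : ℝ)) / 2) * (turnSum (-I * ↑(m * ε)) n X true).re := by
  rw [fcAmp_eq_turnSum, mul_assoc, im_ofReal_mul, I_mul_im, add_re, re_turnSum_false, add_zero]

end Amplitude

theorem stmt17_general (m ε : ℝ) (x t : ℝ) (X : ℤ) (n : ℕ)
    (hx : x = ε * X) (ht : t = ε * n) (hn : 0 < n) :
    (fcAmp m ε X n).re = (fcAmp m ε (-X) n).re ∧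
    (t - x) * (fcAmp m ε X n).im = (t + x - 2 * ε) * (fcAmp m ε (2 - X) n).im := by
  subst hx ht
  constructor
  · rw [re_fcAmp, re_fcAmp, turnSum_false_neg _ hn]
  · rw [im_fcAmp, im_fcAmp]
    linear_combination
      ε * (1 + m ^ 2 * ε ^ 2) ^ ((1 - (n : ℝ)) / 2) * re_turnSum_true_reflect (m * ε) hn X

/-- Symmetry: for a lattice point `(x,t) = (εX, εn)` with `t > 0`,
`a₁(x,t,m,ε) = a₁(−x,t,m,ε)` and `(t−x)·a₂(x,t,m,ε) = (t+x−2ε)·a₂(2ε−x,t,m,ε)`. -/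
theorem stmt17 (m ε : ℝ) (hε : 0 < ε) (hm : 0 ≤ m) (x t : ℝ) (X : ℤ) (n : ℕ)
    (hx : x = ε * X) (ht : t = ε * n) (hn : 0 < n) :
    (fcAmp m ε X n).re = (fcAmp m ε (-X) n).re ∧
    (t - x) * (fcAmp m ε X n).im = (t + x - 2 * ε) * (fcAmp m ε (2 - X) n).im :=
  stmt17_general m ε x t X n hx ht hn
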